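/- If f : [a,b] → ℝ is strongly φ-convex with modulus c > 0 for a continuous function φ : [a,b] → [a,b] with φ(a) < φ(b), then f((φ(a)+φ(b))/2) + (c/12)(φ(b)−φ(a))² ≤ (1/(φ(b)−φ(a))) ∫_{φ(a)}^{φ(b)} f(x) dx ≤ (f(φ(a))+f(φ(b)))/2 − (c/6)(φ(b)−φ(a))². -/

import Mathlib

/-!
Subtracting `c x²` turns strong convexity with modulus `c` into ordinary convexity, and the
classical Hermite–Hadamard inequalities for a convex `g` on `[A, B]` follow by integrating
`2 g ((A + B) / 2) ≤ g x + g (A + B - x) ≤ g A + g B`. The constants `c / 12` and `c / 6` are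
the defects of these inequalities for `x ↦ c x²`; Mathlib's `StrongConvexOn s m` has modulus
`m / 2`, whence `m = 2 c` and the constants `m / 24`, `m / 12` below. The map `φ` only enters
through the intermediate value theorem: `φ '' [a, b] ⊇ [φ a, φ b]`, so `f` is strongly convex
on `[φ a, φ b]`.
-/

open MeasureTheory Set

lemma IntervalIntegrable.comp_reflect {f : ℝ → ℝ} {A B : ℝ}
    (hf : IntervalIntegrable f volume A B) :
    IntervalIntegrable (fun x ↦ f (A + B - x)) volume A B := by
  simpa using (hf.comp_sub_left (A + B)).symm

lemma intervalIntegral.integral_add_reflect {f : ℝ → ℝ} {A B : ℝ}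
    (hf : IntervalIntegrable f volume A B) :
    ∫ x in A..B, (f x + f (A + B - x)) = 2 * ∫ x in A..B, f x := by
  have hrefl : ∫ x in A..B, f (A + B - x) = ∫ x in A..B, f x := by
    rw [intervalIntegral.integral_comp_sub_left f (A + B)]
    ring_nf
  rw [intervalIntegral.integral_add hf hf.comp_reflect, hrefl, two_mul]

namespace ConvexOn

variable {f : ℝ → ℝ} {A B x : ℝ}

lemma two_mul_map_midpoint_le (hf : ConvexOn ℝ (Icc A B) f) (hx : x ∈ Icc A B) :
    2 * f ((A + B) / 2) ≤ f x + f (A + B - x) := by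
  have hx' : A + B - x ∈ Icc A B := ⟨by linarith [hx.2], by linarith [hx.1]⟩
  have h := hf.2 hx hx' (by norm_num : (0 : ℝ) ≤ 1 / 2) (by norm_num : (0 : ℝ) ≤ 1 / 2)
    (by norm_num)
  simp only [smul_eq_mul] at h
  rw [show 1 / 2 * x + 1 / 2 * (A + B - x) = (A + B) / 2 by ring] at h
  linarith

lemma map_add_map_reflect_le (hf : ConvexOn ℝ (Icc A B) f) (hx : x ∈ Icc A B) :
    f x + f (A + B - x) ≤ f A + f B := by
  have hAB : A ≤ B := hx.1.trans hx.2
  rw [← segment_eq_Icc hAB] at hx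
  obtain ⟨s, t, hs, ht, hst, rfl⟩ := hx
  have hA : A ∈ Icc A B := left_mem_Icc.2 hAB
  have hB : B ∈ Icc A B := right_mem_Icc.2 hAB
  have h₁ := hf.2 hA hB hs ht hst
  have h₂ := hf.2 hA hB ht hs (by linarith)
  rw [show A + B - (s • A + t • B) = t • A + s • B by
    simp only [smul_eq_mul]; linear_combination (A + B) * hst.symm]
  simp only [smul_eq_mul] at h₁ h₂
  linear_combination h₁ + h₂ + (f A + f B) * hst

lemma intervalIntegrable (hf : ConvexOn ℝ (Icc A B) f) (hAB : A ≤ B) :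
    IntervalIntegrable f volume A B := by
  rw [intervalIntegrable_iff_integrableOn_Icc_of_le hAB, integrableOn_Icc_iff_integrableOn_Ioo]
  have hcont : ContinuousOn f (Ioo A B) :=
    (hf.subset Ioo_subset_Icc_self (convex_Ioo A B)).continuousOn isOpen_Ioo
  set M := max (f A) (f B)
  have hbound : ∀ x ∈ Icc A B, 2 * f ((A + B) / 2) - M ≤ f x ∧ f x ≤ M := by
    intro x hx
    have hx' : A + B - x ∈ Icc A B := ⟨by linarith [hx.2], by linarith [hx.1]⟩
    have hle (y) (hy : y ∈ Icc A B) : f y ≤ M :=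
      hf.le_max_of_mem_Icc (left_mem_Icc.2 hAB) (right_mem_Icc.2 hAB) hy
    exact ⟨by linarith [hf.two_mul_map_midpoint_le hx, hle _ hx'], hle x hx⟩
  refine IntegrableOn.of_bound measure_Ioo_lt_top (hcont.aestronglyMeasurable measurableSet_Ioo)
    (max |2 * f ((A + B) / 2) - M| |M|) ?_
  filter_upwards [ae_restrict_mem measurableSet_Ioo] with x hx
  obtain ⟨hlow, hupp⟩ := hbound x (Ioo_subset_Icc_self hx)
  exact abs_le_max_abs_abs hlow hupp

lemma mul_map_midpoint_le_integral (hf : ConvexOn ℝ (Icc A B) f) (hAB : A ≤ B) :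
    (B - A) * f ((A + B) / 2) ≤ ∫ x in A..B, f x := by
  have hint := hf.intervalIntegrable hAB
  have h := intervalIntegral.integral_mono_on hAB intervalIntegrable_const
    (hint.add hint.comp_reflect) fun x hx ↦ hf.two_mul_map_midpoint_le hx
  rw [intervalIntegral.integral_add_reflect hint, intervalIntegral.integral_const,
    smul_eq_mul] at h
  linarith

lemma integral_le_mul_add_div_two (hf : ConvexOn ℝ (Icc A B) f) (hAB : A ≤ B) :
    ∫ x in A..B, f x ≤ (B - A) * ((f A + f B) / 2) := by
  have hint := hf.intervalIntegrable hAB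
  have h := intervalIntegral.integral_mono_on hAB (hint.add hint.comp_reflect)
    intervalIntegrable_const fun x hx ↦ hf.map_add_map_reflect_le hx
  rw [intervalIntegral.integral_add_reflect hint, intervalIntegral.integral_const,
    smul_eq_mul] at h
  linarith

end ConvexOn

namespace StrongConvexOn

variable {f : ℝ → ℝ} {A B m : ℝ}

lemma integral_eq_integral_sub_sq_add (hf : StrongConvexOn (Icc A B) m f) (hAB : A ≤ B) :
    ∫ x in A..B, f x =
      (∫ x in A..B, (f x - m / 2 * ‖x‖ ^ 2)) + m / 6 * (B ^ 3 - A ^ 3) := by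
  have hg := (strongConvexOn_iff_convex.1 hf).intervalIntegrable hAB
  have hq : IntervalIntegrable (fun x : ℝ ↦ m / 2 * ‖x‖ ^ 2) volume A B :=
    (by fun_prop : Continuous fun x : ℝ ↦ m / 2 * ‖x‖ ^ 2).intervalIntegrable _ _
  have hfint : IntervalIntegrable f volume A B := by simpa using hg.add hq
  have hq_eq : ∫ x in A..B, m / 2 * ‖x‖ ^ 2 = m / 6 * (B ^ 3 - A ^ 3) := by
    simp only [Real.norm_eq_abs, sq_abs, intervalIntegral.integral_const_mul, integral_pow]
    ring
  rw [intervalIntegral.integral_sub hfint hq, hq_eq]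
  ring

lemma mul_map_midpoint_add_le_integral (hf : StrongConvexOn (Icc A B) m f) (hAB : A ≤ B) :
    (B - A) * (f ((A + B) / 2) + m / 24 * (B - A) ^ 2) ≤ ∫ x in A..B, f x := by
  have h := (strongConvexOn_iff_convex.1 hf).mul_map_midpoint_le_integral hAB
  rw [hf.integral_eq_integral_sub_sq_add hAB]
  simp only [Real.norm_eq_abs, sq_abs] at h ⊢
  linear_combination h

lemma integral_le_mul_sub (hf : StrongConvexOn (Icc A B) m f) (hAB : A ≤ B) :
    ∫ x in A..B, f x ≤ (B - A) * ((f A + f B) / 2 - m / 12 * (B - A) ^ 2) := by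
  have h := (strongConvexOn_iff_convex.1 hf).integral_le_mul_add_div_two hAB
  rw [hf.integral_eq_integral_sub_sq_add hAB]
  simp only [Real.norm_eq_abs, sq_abs] at h ⊢
  linear_combination h

end StrongConvexOn

def StrongPhiConvexOn (s : Set ℝ) (φ : ℝ → ℝ) (c : ℝ) (f : ℝ → ℝ) : Prop :=
  ∀ x ∈ s, ∀ y ∈ s, ∀ t ∈ Icc (0 : ℝ) 1,
    f (t * φ x + (1 - t) * φ y) ≤
      t * f (φ x) + (1 - t) * f (φ y) - c * t * (1 - t) * (φ x - φ y) ^ 2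

lemma StrongPhiConvexOn.strongConvexOn_Icc {a b c : ℝ} {f φ : ℝ → ℝ}
    (hf : StrongPhiConvexOn (Icc a b) φ c f) (hab : a ≤ b) (hφ : ContinuousOn φ (Icc a b)) :
    StrongConvexOn (Icc (φ a) (φ b)) (2 * c) f := by
  have hsurj : Icc (φ a) (φ b) ⊆ φ '' Icc a b := intermediate_value_Icc hab hφ
  refine ⟨convex_Icc _ _, fun u hu v hv s t hs ht hst ↦ ?_⟩
  obtain ⟨x, hx, rfl⟩ := hsurj hu
  obtain ⟨y, hy, rfl⟩ := hsurj hv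
  obtain rfl : t = 1 - s := by linarith
  have h := hf x hx y hy s ⟨hs, by linarith⟩
  simp only [smul_eq_mul, Real.norm_eq_abs, sq_abs]
  linear_combination h

theorem stmt0_general (a b c : ℝ) (hab : a < b)
    (f : ℝ → ℝ)
    (φ : ℝ → ℝ)
    (hφcont : ContinuousOn φ (Icc a b)) (hφab : φ a < φ b)
    (hconv : ∀ x ∈ Icc a b, ∀ y ∈ Icc a b, ∀ t ∈ Icc (0:ℝ) 1,
      f (t * φ x + (1 - t) * φ y) ≤
        t * f (φ x) + (1 - t) * f (φ y) - c * t * (1 - t) * (φ x - φ y) ^ 2) :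
    f ((φ a + φ b) / 2) + c / 12 * (φ b - φ a) ^ 2 ≤
        (1 / (φ b - φ a)) * (∫ x in (φ a)..(φ b), f x) ∧
      (1 / (φ b - φ a)) * (∫ x in (φ a)..(φ b), f x) ≤
        (f (φ a) + f (φ b)) / 2 - c / 6 * (φ b - φ a) ^ 2 := by
  have hf : StrongConvexOn (Icc (φ a) (φ b)) (2 * c) f :=
    StrongPhiConvexOn.strongConvexOn_Icc hconv hab.le hφcont
  have hlen : 0 < φ b - φ a := sub_pos.2 hφab
  rw [one_div_mul_eq_div, le_div_iff₀' hlen, div_le_iff₀' hlen]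
  constructor
  · linarith [hf.mul_map_midpoint_add_le_integral hφab.le]
  · linarith [hf.integral_le_mul_sub hφab.le]

theorem stmt0 (a b c : ℝ) (hab : a < b) (hc : 0 < c)
    (f : ℝ → ℝ)
    (φ : ℝ → ℝ) (hφmap : MapsTo φ (Icc a b) (Icc a b))
    (hφcont : ContinuousOn φ (Icc a b)) (hφab : φ a < φ b)
    (hconv : ∀ x ∈ Icc a b, ∀ y ∈ Icc a b, ∀ t ∈ Icc (0:ℝ) 1,
      f (t * φ x + (1 - t) * φ y) ≤
        t * f (φ x) + (1 - t) * f (φ y) - c * t * (1 - t) * (φ x - φ y) ^ 2) :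
    f ((φ a + φ b) / 2) + c / 12 * (φ b - φ a) ^ 2 ≤
        (1 / (φ b - φ a)) * (∫ x in (φ a)..(φ b), f x) ∧
      (1 / (φ b - φ a)) * (∫ x in (φ a)..(φ b), f x) ≤
        (f (φ a) + f (φ b)) / 2 - c / 6 * (φ b - φ a) ^ 2 :=
  stmt0_general a b c hab f φ hφcont hφab hconv
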